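/- Let n ≥ 1 and let f be any coloring satisfying the bmf boundary conditions. Then 2^{-n}(1,1,0) is the unique grid vertex lying on the boundary of [0,1]^3 that is adjacent to cubelets of color 1, of color 2, and of color 3 under f. -/

import Mathlib

/-- A cubelet index i is adjacent to a grid coordinate a (both along one axis)
iff the grid coordinate is one of the two faces of the cubelet: a = i or a = i + 1.
(The grid vertex 2^{-n}(a,b,c) is a corner of cubelet K_{ijk} iff this holds on each axis.) -/
def AdjIdx (a i : ℕ) : Prop := a = i ∨ a = i + 1

/-- A cubelet K_{ijk} is exterior if some index equals 0 or 2^n − 1. -/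
def ExteriorCubelet (n : ℕ) (i j k : Fin (2 ^ n)) : Prop :=
  i.val = 0 ∨ j.val = 0 ∨ k.val = 0 ∨
    i.val = 2 ^ n - 1 ∨ j.val = 2 ^ n - 1 ∨ k.val = 2 ^ n - 1

/-- The bmf boundary conditions on a coloring f. -/
def BMFBoundary (n : ℕ) (f : Fin (2 ^ n) → Fin (2 ^ n) → Fin (2 ^ n) → Fin 4) : Prop :=
  ∀ i j k : Fin (2 ^ n),
    (i.val = 0 → f i j k = 1) ∧
    (j.val = 0 → 0 < i.val → f i j k = 2) ∧
    (k.val = 0 → 0 < i.val → 0 < j.val → f i j k = 3) ∧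
    (ExteriorCubelet n i j k → 0 < i.val → 0 < j.val → 0 < k.val → f i j k = 0)

/-- The grid vertex 2^{-n}(a,b,c) has a cubelet of color `col` adjacent to it. -/
def HasColorAt (n : ℕ) (f : Fin (2 ^ n) → Fin (2 ^ n) → Fin (2 ^ n) → Fin 4)
    (a b c : ℕ) (col : Fin 4) : Prop :=
  ∃ i j k : Fin (2 ^ n), AdjIdx a i.val ∧ AdjIdx b j.val ∧ AdjIdx c k.val ∧ f i j k = col
/-- The grid vertex 2^{-n}(a,b,c), with 0 ≤ a,b,c ≤ 2^n, lies on the boundary of [0,1]³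
iff some coordinate equals 0 or 1, i.e. some index equals 0 or 2^n. -/
def OnBoundary (n : ℕ) (a b c : ℕ) : Prop :=
  a = 0 ∨ a = 2 ^ n ∨ b = 0 ∨ b = 2 ^ n ∨ c = 0 ∨ c = 2 ^ n

/-!
A cubelet adjacent to a boundary grid vertex is exterior, and on exterior cubelets the bmf
conditions determine the coloring completely: color 1 exactly when `i = 0`, color 2 exactly when
`0 < i` and `j = 0`, color 3 exactly when `0 < i`, `0 < j` and `k = 0`. A vertex `(a, b, c)` seeing
color 1 thus has `a ≤ 1`; seeing color 3 it has `1 ≤ a`, `1 ≤ b` and `c ≤ 1`; seeing color 2 it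
has `b ≤ 1`. Hence `a = b = 1`, and since `2 ≤ 2 ^ n` the only boundary choice left is `c = 0`.
-/

def bmfColor (i j k : ℕ) : Fin 4 :=
  if i = 0 then 1 else if j = 0 then 2 else if k = 0 then 3 else 0

lemma bmfColor_eq_one_iff {i j k : ℕ} : bmfColor i j k = 1 ↔ i = 0 := by
  unfold bmfColor; split_ifs <;> simp_all

lemma bmfColor_eq_two_iff {i j k : ℕ} : bmfColor i j k = 2 ↔ i ≠ 0 ∧ j = 0 := by
  unfold bmfColor; split_ifs <;> simp_all

lemma bmfColor_eq_three_iff {i j k : ℕ} : bmfColor i j k = 3 ↔ i ≠ 0 ∧ j ≠ 0 ∧ k = 0 := by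
  unfold bmfColor; split_ifs <;> simp_all

lemma BMFBoundary.apply_eq_bmfColor {n : ℕ} {f : Fin (2 ^ n) → Fin (2 ^ n) → Fin (2 ^ n) → Fin 4}
    (hf : BMFBoundary n f) {i j k : Fin (2 ^ n)} (hext : ExteriorCubelet n i j k) :
    f i j k = bmfColor i j k := by
  obtain ⟨h₁, h₂, h₃, h₀⟩ := hf i j k
  unfold bmfColor
  split_ifs with hi hj hk
  · exact h₁ hi
  · exact h₂ hj (Nat.pos_of_ne_zero hi)
  · exact h₃ hk (Nat.pos_of_ne_zero hi) (Nat.pos_of_ne_zero hj)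
  · exact h₀ hext (Nat.pos_of_ne_zero hi) (Nat.pos_of_ne_zero hj) (Nat.pos_of_ne_zero hk)

lemma exteriorCubelet_of_onBoundary {n a b c : ℕ} {i j k : Fin (2 ^ n)} (hi : AdjIdx a i)
    (hj : AdjIdx b j) (hk : AdjIdx c k) (hb : OnBoundary n a b c) :
    ExteriorCubelet n i j k := by
  have := i.isLt; have := j.isLt; have := k.isLt
  unfold AdjIdx at hi hj hk; unfold OnBoundary at hb; unfold ExteriorCubelet
  omega

lemma HasColorAt.exists_bmfColor_of_onBoundary {n a b c : ℕ}
    {f : Fin (2 ^ n) → Fin (2 ^ n) → Fin (2 ^ n) → Fin 4} {col : Fin 4}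
    (h : HasColorAt n f a b c col) (hf : BMFBoundary n f) (hb : OnBoundary n a b c) :
    ∃ i j k : ℕ, AdjIdx a i ∧ AdjIdx b j ∧ AdjIdx c k ∧ bmfColor i j k = col := by
  obtain ⟨i, j, k, hi, hj, hk, hcol⟩ := h
  refine ⟨i, j, k, hi, hj, hk, ?_⟩
  rw [← hf.apply_eq_bmfColor (exteriorCubelet_of_onBoundary hi hj hk hb), hcol]

lemma hasColorAt_one_one_zero {n : ℕ} (hn : 1 ≤ n)
    {f : Fin (2 ^ n) → Fin (2 ^ n) → Fin (2 ^ n) → Fin 4} (hf : BMFBoundary n f) :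
    HasColorAt n f 1 1 0 1 ∧ HasColorAt n f 1 1 0 2 ∧ HasColorAt n f 1 1 0 3 := by
  have h2n : 1 < 2 ^ n := Nat.one_lt_two_pow (by omega)
  let z : Fin (2 ^ n) := ⟨0, by omega⟩
  let o : Fin (2 ^ n) := ⟨1, h2n⟩
  exact ⟨⟨z, z, z, .inr rfl, .inr rfl, .inl rfl, (hf z z z).1 rfl⟩,
    ⟨o, z, z, .inl rfl, .inr rfl, .inl rfl, (hf o z z).2.1 rfl one_pos⟩,
    ⟨o, o, z, .inl rfl, .inl rfl, .inl rfl, (hf o o z).2.2.1 rfl one_pos one_pos⟩⟩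

/-- for any coloring f satisfying the bmf boundary conditions,
2^{-n}(1,1,0) is the unique boundary grid vertex adjacent to cubelets of
colors 1, 2 and 3. -/
theorem unique_trichromatic_boundary_vertex (n : ℕ) (hn : 1 ≤ n)
    (f : Fin (2 ^ n) → Fin (2 ^ n) → Fin (2 ^ n) → Fin 4)
    (hf : BMFBoundary n f) :
    (OnBoundary n 1 1 0 ∧
      HasColorAt n f 1 1 0 1 ∧ HasColorAt n f 1 1 0 2 ∧ HasColorAt n f 1 1 0 3) ∧
    ∀ a b c : ℕ, a ≤ 2 ^ n → b ≤ 2 ^ n → c ≤ 2 ^ n → OnBoundary n a b c →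
      HasColorAt n f a b c 1 → HasColorAt n f a b c 2 → HasColorAt n f a b c 3 →
      a = 1 ∧ b = 1 ∧ c = 0 := by
  refine ⟨⟨by simp [OnBoundary], hasColorAt_one_one_zero hn hf⟩, ?_⟩
  intro a b c _ _ _ hb h₁ h₂ h₃
  obtain ⟨i₁, j₁, k₁, hi₁, -, -, e₁⟩ := h₁.exists_bmfColor_of_onBoundary hf hb
  obtain ⟨i₂, j₂, k₂, -, hj₂, -, e₂⟩ := h₂.exists_bmfColor_of_onBoundary hf hb
  obtain ⟨i₃, j₃, k₃, hi₃, hj₃, hk₃, e₃⟩ := h₃.exists_bmfColor_of_onBoundary hf hb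
  rw [bmfColor_eq_one_iff] at e₁
  rw [bmfColor_eq_two_iff] at e₂
  rw [bmfColor_eq_three_iff] at e₃
  have h2n : 1 < 2 ^ n := Nat.one_lt_two_pow (by omega)
  unfold AdjIdx at *
  unfold OnBoundary at hb
  omega
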